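/- arXiv:2201.03930 — 5 statements merged into one kernel-verified Lean document; each statement's English description precedes it below -/
import Mathlib

section
/- Dual-variable conservation and mean dynamics of Algorithm 1 (equations (10)–(11)). For the iterates of Algorithm 1, for every k ∈ ℕ: (i) Σ_{i=1}^{n} v_{i,k} = 0, and (ii) x̄_{k+1} = x̄_k − (η/n)·Σ_{i=1}^{n} ∇f_i(x_{i,k}), where x̄_k = (1/n)·Σ_{i=1}^n x_{i,k}. -/
/-! Summed over the agents, a Laplacian term `Σ_j L_ij q_j` vanishes because a symmetric `L`
with zero row sums also has zero column sums. So `a - b` and then `v` only receive increments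
summing to zero, and the only contribution left in the update of `Σ_i x_i` is the gradients. -/

open Finset

theorem Matrix.sum_apply_eq_zero_of_isSymm {ι R : Type*} [Fintype ι] [CommSemiring R]
    {L : Matrix ι ι R} (hL : L.IsSymm) (hL1 : L.mulVec 1 = 0) (j : ι) : ∑ i, L i j = 0 := by
  have := congrFun hL1 j
  simp only [Matrix.mulVec, dotProduct, Pi.one_apply, mul_one, Pi.zero_apply] at this
  rw [← this]
  exact sum_congr rfl fun i _ => hL.apply j i

section Conservation

variable {ι M : Type*} [Fintype ι] [AddCommGroup M]

theorem sum_sum_smul_eq_zero_of_sum_col_eq_zero {R : Type*} [Ring R] [Module R M]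
    {L : Matrix ι ι R} (hL : ∀ j, ∑ i, L i j = 0) (q : ι → M) :
    ∑ i, ∑ j, L i j • q j = 0 := by
  rw [sum_comm]
  exact sum_eq_zero fun j _ => by rw [← sum_smul, hL, zero_smul]

theorem sum_eq_zero_of_increments_sum_eq_zero {s w : ℕ → ι → M} (h0 : ∀ i, s 0 i = 0)
    (hs : ∀ k i, s (k + 1) i = s k i + w k i) (hw : ∀ k, ∑ i, w k i = 0) (k : ℕ) :
    ∑ i, s k i = 0 := by
  induction k with
  | zero => simp [h0]
  | succ k ih => simp only [hs, sum_add_distrib, ih, hw, add_zero]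

end Conservation

theorem algorithm1_dual_conservation_and_mean_dynamics_general
    (n d : ℕ)
    (L : Matrix (Fin n) (Fin n) ℝ)
    (hLsymm : L.IsSymm)
    (hL1 : L.mulVec (fun _ => 1) = 0)
    (f : Fin n → EuclideanSpace ℝ (Fin d) → ℝ)
    (α β η ψ : ℝ)
    (x v a b q : ℕ → Fin n → EuclideanSpace ℝ (Fin d))
    (ha0 : ∀ i, a 0 i = 0) (hb0 : ∀ i, b 0 i = 0) (hv0 : ∀ i, v 0 i = 0)
    (ha : ∀ k i, a (k+1) i = a k i + ψ • q k i)
    (hb : ∀ k i, b (k+1) i = b k i + ψ • (q k i - ∑ j, L i j • q k j))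
    (hx : ∀ k i, x (k+1) i = x k i
        - (η * α) • (a k i - b k i + ∑ j, L i j • q k j)
        - η • (β • v k i + gradient (f i) (x k i)))
    (hv : ∀ k i, v (k+1) i = v k i + (η * β) • (a k i - b k i + ∑ j, L i j • q k j)) :
    ∀ k : ℕ,
      (∑ i, v k i) = 0 ∧
      (n : ℝ)⁻¹ • ∑ i, x (k+1) i
        = (n : ℝ)⁻¹ • (∑ i, x k i) - (η / n) • ∑ i, gradient (f i) (x k i) := by
  have hLq k : ∑ i, ∑ j, L i j • q k j = 0 :=
    sum_sum_smul_eq_zero_of_sum_col_eq_zero (L.sum_apply_eq_zero_of_isSymm hLsymm hL1) (q k)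
  have hab : ∀ k, ∑ i, (a k i - b k i) = 0 :=
    sum_eq_zero_of_increments_sum_eq_zero (s := fun k i => a k i - b k i)
      (w := fun k i => ψ • ∑ j, L i j • q k j) (fun i => by simp [ha0, hb0])
      (fun k i => by rw [ha, hb]; module) (fun k => by rw [← smul_sum, hLq, smul_zero])
  have hw k : ∑ i, (a k i - b k i + ∑ j, L i j • q k j) = 0 := by
    rw [sum_add_distrib, hab, hLq, add_zero]
  have hvsum : ∀ k, ∑ i, v k i = 0 :=
    sum_eq_zero_of_increments_sum_eq_zero hv0 hv fun k => by rw [← smul_sum, hw, smul_zero]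
  refine fun k => ⟨hvsum k, ?_⟩
  have hxsum : ∑ i, x (k+1) i = ∑ i, x k i - η • ∑ i, gradient (f i) (x k i) := by
    simp only [hx, sum_sub_distrib, sum_add_distrib, ← smul_sum, hw, hvsum, smul_zero,
      sub_zero, zero_add]
  rw [hxsum, smul_sub, smul_smul, div_eq_inv_mul]

/-- Equations (10)–(11) of the paper: along Algorithm 1, the dual variables sum to zero and
the average iterate obeys `x̄_{k+1} = x̄_k − (η/n)·Σ_i ∇f_i(x_{i,k})`. -/
theorem algorithm1_dual_conservation_and_mean_dynamics
    (n d : ℕ) (hn : 1 ≤ n) (hd : 1 ≤ d)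
    (L : Matrix (Fin n) (Fin n) ℝ)
    (hLsymm : L.IsSymm)
    (hL1 : L.mulVec (fun _ => 1) = 0)
    (f : Fin n → EuclideanSpace ℝ (Fin d) → ℝ)
    (hdiff : ∀ i, Differentiable ℝ (f i))
    (C : EuclideanSpace ℝ (Fin d) → EuclideanSpace ℝ (Fin d))
    (α β η ψ : ℝ) (hα : 0 < α) (hβ : 0 < β) (hη : 0 < η) (hψ : 0 < ψ)
    (x v a b q : ℕ → Fin n → EuclideanSpace ℝ (Fin d))
    (ha0 : ∀ i, a 0 i = 0) (hb0 : ∀ i, b 0 i = 0) (hv0 : ∀ i, v 0 i = 0)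
    (hq0 : ∀ i, q 0 i = C (x 0 i))
    (ha : ∀ k i, a (k+1) i = a k i + ψ • q k i)
    (hb : ∀ k i, b (k+1) i = b k i + ψ • (q k i - ∑ j, L i j • q k j))
    (hx : ∀ k i, x (k+1) i = x k i
        - (η * α) • (a k i - b k i + ∑ j, L i j • q k j)
        - η • (β • v k i + gradient (f i) (x k i)))
    (hv : ∀ k i, v (k+1) i = v k i + (η * β) • (a k i - b k i + ∑ j, L i j • q k j))
    (hq : ∀ k i, q (k+1) i = C (x (k+1) i - a (k+1) i)) :
    ∀ k : ℕ,
      (∑ i, v k i) = 0 ∧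
      (n : ℝ)⁻¹ • ∑ i, x (k+1) i
        = (n : ℝ)⁻¹ • (∑ i, x k i) - (η / n) • ∑ i, gradient (f i) (x k i) :=
  algorithm1_dual_conservation_and_mean_dynamics_general n d L hLsymm hL1 f α β η ψ x v a b q ha0
    hb0 hv0 ha hb hx hv
end

section
/- Non-negativity and coercivity of the Lyapunov function (inequalities (39)–(40)). Let n ≥ 2 and let L be a real n×n symmetric positive semidefinite matrix with L·1_n = 0 and kernel exactly span{1_n}; let K_n = I_n − (1/n)·1_n·1_nᵀ, let ρ(L) and ρ2(L) be the largest and smallest positive eigenvalues of L, and let P be a symmetric positive definite n×n matrix with P·L = L·P = K_n and ρ(L)⁻¹·I_n ≼ P ≼ ρ2(L)⁻¹·I_n. Let K = K_n ⊗ I_d and P̂ = P ⊗ I_d. Let α, β > 0 satisfy α·ρ2(L) > β. Then for all x, w ∈ ℝ^{n·d}: (1/2)·xᵀK x + ((α+β)/(2β))·wᵀP̂ w + xᵀK P̂ w ≥ ε10·(xᵀK x + wᵀP̂ w) ≥ 0, where ε10 = (α·ρ2(L) − β)/(2·α·ρ2(L)). -/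
open Matrix
open scoped Kronecker

lemma ps_cauchy {m : Type*} [Fintype m] [DecidableEq m] {M : Matrix m m ℝ}
    (hM : M.PosSemidef) (x w : m → ℝ) :
    (x ⬝ᵥ M.mulVec w)^2 ≤ (x ⬝ᵥ M.mulVec x) * (w ⬝ᵥ M.mulVec w) := by
  obtain ⟨B, hB⟩ : ∃ B : Matrix m m ℝ, M = star B * B := by
    open scoped MatrixOrder in exact CStarAlgebra.nonneg_iff_eq_star_mul_self.mp hM.nonneg
  rw [Matrix.star_eq_conjTranspose] at hB
  subst hB
  have key : ∀ u v : m → ℝ, u ⬝ᵥ (Bᴴ * B).mulVec v = (B.mulVec u) ⬝ᵥ (B.mulVec v) := by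
    intro u v
    rw [← Matrix.mulVec_mulVec, Matrix.dotProduct_mulVec,
      Matrix.conjTranspose_eq_transpose_of_trivial, Matrix.vecMul_transpose]
  rw [key, key, key]
  simpa [dotProduct, sq] using
    Finset.sum_mul_sq_le_sq_mul_sq Finset.univ (B.mulVec x) (B.mulVec w)

lemma slice_form {n d : ℕ} (A : Matrix (Fin n) (Fin n) ℝ) (z w : Fin n × Fin d → ℝ) :
    z ⬝ᵥ (A ⊗ₖ (1 : Matrix (Fin d) (Fin d) ℝ)).mulVec w
      = ∑ j : Fin d, (fun i => z (i,j)) ⬝ᵥ A.mulVec (fun i => w (i,j)) := by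
  simp only [dotProduct, Matrix.mulVec, Fintype.sum_prod_type,
    Matrix.kroneckerMap_apply, Matrix.one_apply, mul_ite, mul_one, mul_zero, ite_mul, zero_mul]
  rw [Finset.sum_comm]
  refine Finset.sum_congr rfl fun j _ => Finset.sum_congr rfl fun i _ => ?_
  rw [Finset.sum_comm]
  simp [Finset.mul_sum]

-- symmetric shift helper
lemma sym_shift {n : ℕ} {A : Matrix (Fin n) (Fin n) ℝ} (hA : Aᵀ = A) (a b : Fin n → ℝ) :
    (A.mulVec a) ⬝ᵥ b = a ⬝ᵥ A.mulVec b := by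
  conv_lhs => rw [← hA, Matrix.mulVec_transpose]
  rw [← Matrix.dotProduct_mulVec]


lemma scalar_key (a b c α β ρ2 : ℝ) (ha : 0 ≤ a) (hb : 0 ≤ b)
    (hα : 0 < α) (hβ : 0 < β) (hρ2 : 0 < ρ2) (hαβ : β < α * ρ2)
    (hc : c ^ 2 ≤ (ρ2⁻¹ * a) * b) :
    (α * ρ2 - β) / (2 * α * ρ2) * (a + b)
      ≤ (1/2) * a + ((α + β) / (2 * β)) * b + c
    ∧ 0 ≤ (α * ρ2 - β) / (2 * α * ρ2) * (a + b) := by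
  constructor
  · have h4 : (β/(2*α*ρ2)) * (α/(2*β)) * (4*(a*b)) = ρ2⁻¹ * (a*b) := by
      field_simp
      ring
    have hX : 0 ≤ β/(2*α*ρ2)*a + α/(2*β)*b := by positivity
    have hsq : c^2 ≤ (β/(2*α*ρ2)*a + α/(2*β)*b)^2 := by
      nlinarith [sq_nonneg (β/(2*α*ρ2)*a - α/(2*β)*b), hc, h4]
    have hcge : -(β/(2*α*ρ2)*a + α/(2*β)*b) ≤ c := by
      nlinarith [hsq, hX]
    have e : (1/2)*a + ((α+β)/(2*β))*b - (β/(2*α*ρ2)*a + α/(2*β)*b)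
        - (α*ρ2-β)/(2*α*ρ2)*(a+b) = β/(2*α*ρ2)*b := by
      field_simp
      ring
    have hpos : 0 ≤ β/(2*α*ρ2)*b := by positivity
    linarith
  · have h1 : 0 < α * ρ2 - β := by linarith
    have h2 : (0:ℝ) < 2 * α * ρ2 := by positivity
    exact mul_nonneg (div_nonneg h1.le h2.le) (by linarith)

/-- Inequalities (39)–(40) of the paper: non-negativity and coercivity of the Lyapunov
function built from the quadratic forms of `K = K_n ⊗ I_d` and `P̂ = P ⊗ I_d`. -/
theorem lyapunov_nonneg_coercive
    (n d : ℕ) (hn : 2 ≤ n) (hd : 1 ≤ d)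
    (L : Matrix (Fin n) (Fin n) ℝ) (ρL ρ2L : ℝ)
    (hL : L.PosSemidef)
    (hL1 : L.mulVec (fun _ => 1) = 0)
    (hker : ∀ z : Fin n → ℝ, L.mulVec z = 0 → ∃ c : ℝ, z = fun _ => c)
    (hρ : IsGreatest {μ : ℝ | ∃ z : Fin n → ℝ, z ≠ 0 ∧ L.mulVec z = μ • z} ρL)
    (hρ2 : IsLeast {μ : ℝ | 0 < μ ∧ ∃ z : Fin n → ℝ, z ≠ 0 ∧ L.mulVec z = μ • z} ρ2L)
    (Kn : Matrix (Fin n) (Fin n) ℝ)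
    (hKn : Kn = (1 : Matrix (Fin n) (Fin n) ℝ) - (n : ℝ)⁻¹ • Matrix.of (fun _ _ => (1:ℝ)))
    (P : Matrix (Fin n) (Fin n) ℝ)
    (hPsymm : P.IsSymm) (hPpos : P.PosDef)
    (hPL : P * L = Kn) (hLP : L * P = Kn)
    (hPlow : ∀ z : Fin n → ℝ, ρL⁻¹ * (z ⬝ᵥ z) ≤ z ⬝ᵥ P.mulVec z)
    (hPupp : ∀ z : Fin n → ℝ, z ⬝ᵥ P.mulVec z ≤ ρ2L⁻¹ * (z ⬝ᵥ z))
    (K Phat : Matrix (Fin n × Fin d) (Fin n × Fin d) ℝ)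
    (hK : K = Kn ⊗ₖ (1 : Matrix (Fin d) (Fin d) ℝ))
    (hPhat : Phat = P ⊗ₖ (1 : Matrix (Fin d) (Fin d) ℝ))
    (α β ε10 : ℝ) (hα : 0 < α) (hβ : 0 < β) (hαβ : β < α * ρ2L)
    (hε10 : ε10 = (α * ρ2L - β) / (2 * α * ρ2L)) :
    ∀ x w : Fin n × Fin d → ℝ,
      ε10 * (x ⬝ᵥ K.mulVec x + w ⬝ᵥ Phat.mulVec w)
        ≤ (1/2) * (x ⬝ᵥ K.mulVec x) + ((α + β) / (2 * β)) * (w ⬝ᵥ Phat.mulVec w)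
          + x ⬝ᵥ (K * Phat).mulVec w
      ∧ 0 ≤ ε10 * (x ⬝ᵥ K.mulVec x + w ⬝ᵥ Phat.mulVec w) := by
  have hρ2pos : 0 < ρ2L := hρ2.1.1
  have hn0 : (n : ℝ) ≠ 0 := by positivity
  -- basic facts about Kn
  have hKnsymm : Knᵀ = Kn := by
    rw [hKn]; ext i j
    simp [Matrix.transpose_apply, Matrix.one_apply, eq_comm]
  have hKnKn : Kn * Kn = Kn := by
    rw [hKn]; ext i j
    simp [Matrix.mul_apply, Matrix.one_apply, sub_mul, mul_sub, Finset.sum_sub_distrib,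
      Finset.sum_ite_eq, Finset.sum_ite_eq']
    field_simp
    ring
  have hKnPS : Kn.PosSemidef := by
    have hKK : Kn = Knᴴ * Kn := by
      rw [Matrix.conjTranspose_eq_transpose_of_trivial, hKnsymm, hKnKn]
    have := Matrix.posSemidef_conjTranspose_mul_self Kn
    rwa [← hKK] at this
  have hPPS := hPpos.posSemidef
  have hPt : Pᵀ = P := hPsymm
  -- Kn annihilates constants
  have hKn1 : Kn.mulVec (fun _ => 1) = 0 := by
    rw [hKn]; ext i
    simp [Matrix.mulVec, dotProduct, Matrix.one_apply, sub_mul,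
      Finset.sum_sub_distrib, Finset.sum_ite_eq]
    field_simp
    ring
  -- P maps constants to constants
  obtain ⟨c, hPone⟩ := hker (P.mulVec (fun _ => 1)) (by
    rw [Matrix.mulVec_mulVec, hLP, hKn1])
  -- commutation and projection identities
  have hcomm : P * Kn = Kn * P := by
    rw [← hLP, ← Matrix.mul_assoc, hPL, hLP]
  have hMsymm : (Kn * P)ᵀ = Kn * P := by
    rw [Matrix.transpose_mul, hPt, hKnsymm, hcomm]
  have hMK : Kn * P * Kn = Kn * P := by
    nth_rw 2 [← hLP]
    rw [← Matrix.mul_assoc, Matrix.mul_assoc Kn P L, hPL, hKnKn]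
  -- M = Kn * P is PSD
  have hMPS : (Kn * P).PosSemidef := by
    have : Kn * P = P * L * Pᴴ := by
      rw [Matrix.conjTranspose_eq_transpose_of_trivial, hPt, Matrix.mul_assoc, hLP, hcomm]
    rw [this]
    exact hL.mul_mul_conjTranspose_same P
  -- slice-level inequality 1
  have lem1 : ∀ s : Fin n → ℝ,
      s ⬝ᵥ (Kn * P).mulVec s ≤ ρ2L⁻¹ * (s ⬝ᵥ Kn.mulVec s) := by
    intro s
    have h1 : s ⬝ᵥ (Kn * P).mulVec s
        = (Kn.mulVec s) ⬝ᵥ P.mulVec (Kn.mulVec s) := by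
      rw [sym_shift hKnsymm, Matrix.mulVec_mulVec, Matrix.mulVec_mulVec, hMK]
    have h2 : (Kn.mulVec s) ⬝ᵥ (Kn.mulVec s) = s ⬝ᵥ Kn.mulVec s := by
      rw [sym_shift hKnsymm, Matrix.mulVec_mulVec, hKnKn]
    calc s ⬝ᵥ (Kn * P).mulVec s = (Kn.mulVec s) ⬝ᵥ P.mulVec (Kn.mulVec s) := h1
      _ ≤ ρ2L⁻¹ * ((Kn.mulVec s) ⬝ᵥ (Kn.mulVec s)) := hPupp _
      _ = ρ2L⁻¹ * (s ⬝ᵥ Kn.mulVec s) := by rw [h2]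
  -- slice-level inequality 2
  have lem2 : ∀ s : Fin n → ℝ,
      s ⬝ᵥ (Kn * P).mulVec s ≤ s ⬝ᵥ P.mulVec s := by
    intro s
    set u := Kn.mulVec s with hu
    set t : ℝ := (n : ℝ)⁻¹ * ∑ k, s k with ht
    have hv : s - u = fun _ => t := by
      ext i
      simp [hu, hKn, Matrix.mulVec, dotProduct, Matrix.one_apply, sub_mul,
        Finset.sum_sub_distrib, Finset.sum_ite_eq, ht]
      exact (Finset.mul_sum _ _ _).symm
    have hPv : P.mulVec (s - u) = fun _ => t * c := by
      have : (s - u) = t • (fun _ => (1:ℝ)) := by rw [hv]; ext i; simp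
      rw [this, Matrix.mulVec_smul, hPone]
      ext i; simp
    have hsumu : (fun _ => (1:ℝ)) ⬝ᵥ u = 0 := by
      rw [hu, ← sym_shift hKnsymm, hKn1]
      simp
    have huPu : u ⬝ᵥ P.mulVec u = s ⬝ᵥ (Kn * P).mulVec s := by
      rw [hu, sym_shift hKnsymm, Matrix.mulVec_mulVec, Matrix.mulVec_mulVec, hMK]
    have huPv : u ⬝ᵥ P.mulVec (s - u) = 0 := by
      rw [hPv]
      have : u ⬝ᵥ (fun _ => t * c) = (t * c) * ((fun _ => (1:ℝ)) ⬝ᵥ u) := by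
        simp [dotProduct, Finset.mul_sum, mul_comm]
        exact (Finset.sum_mul _ _ _).symm
      rw [this, hsumu, mul_zero]
    have hPsw : ∀ a b : Fin n → ℝ, a ⬝ᵥ P.mulVec b = b ⬝ᵥ P.mulVec a := by
      intro a b
      rw [dotProduct_comm, sym_shift hPt]
    have hvPu : (s - u) ⬝ᵥ P.mulVec u = 0 := by
      rw [hPsw, huPv]
    have hvPv : 0 ≤ (s - u) ⬝ᵥ P.mulVec (s - u) := by
      simpa using hPPS.dotProduct_mulVec_nonneg (s - u)
    have hexp : s ⬝ᵥ P.mulVec s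
        = u ⬝ᵥ P.mulVec u + u ⬝ᵥ P.mulVec (s - u) + (s - u) ⬝ᵥ P.mulVec u
          + (s - u) ⬝ᵥ P.mulVec (s - u) := by
      have hs : s = u + (s - u) := by ext i; simp
      conv_lhs => rw [hs]
      rw [Matrix.mulVec_add, dotProduct_add, add_dotProduct,
        add_dotProduct]
      ring
    rw [hexp, huPu, huPv, hvPu]
    linarith
    -- global quantities
  intro x w
  have hKP : K * Phat = (Kn * P) ⊗ₖ (1 : Matrix (Fin d) (Fin d) ℝ) := by
    rw [hK, hPhat, ← Matrix.mul_kronecker_mul, Matrix.one_mul]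
  have ha : 0 ≤ x ⬝ᵥ K.mulVec x := by
    rw [hK, slice_form]
    exact Finset.sum_nonneg fun j _ => by simpa using hKnPS.dotProduct_mulVec_nonneg (fun i => x (i,j))
  have hb : 0 ≤ w ⬝ᵥ Phat.mulVec w := by
    rw [hPhat, slice_form]
    exact Finset.sum_nonneg fun j _ => by simpa using hPPS.dotProduct_mulVec_nonneg (fun i => w (i,j))
  have hMx : ∀ z : Fin n × Fin d → ℝ, 0 ≤ z ⬝ᵥ (K * Phat).mulVec z := by
    intro z
    rw [hKP, slice_form]
    exact Finset.sum_nonneg fun j _ => by simpa using hMPS.dotProduct_mulVec_nonneg (fun i => z (i,j))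
  have hcb1 : x ⬝ᵥ (K * Phat).mulVec x ≤ ρ2L⁻¹ * (x ⬝ᵥ K.mulVec x) := by
    rw [hKP, hK, slice_form, slice_form, Finset.mul_sum]
    exact Finset.sum_le_sum fun j _ => lem1 _
  have hcb2 : w ⬝ᵥ (K * Phat).mulVec w ≤ w ⬝ᵥ Phat.mulVec w := by
    rw [hKP, hPhat, slice_form, slice_form]
    exact Finset.sum_le_sum fun j _ => lem2 _
  have hMhatPS : ((Kn * P) ⊗ₖ (1 : Matrix (Fin d) (Fin d) ℝ)).PosSemidef := by
    refine Matrix.PosSemidef.of_dotProduct_mulVec_nonneg ?_ ?_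
    · show _ᴴ = _
      rw [Matrix.conjTranspose_eq_transpose_of_trivial, ← Matrix.kroneckerMap_transpose,
        hMsymm, Matrix.transpose_one]
    · intro z
      have := hMx z
      rw [hKP] at this
      simpa using this
  have hcs : (x ⬝ᵥ (K * Phat).mulVec w)^2
      ≤ (x ⬝ᵥ (K * Phat).mulVec x) * (w ⬝ᵥ (K * Phat).mulVec w) := by
    rw [hKP]
    exact ps_cauchy hMhatPS x w
  have hc2 : (x ⬝ᵥ (K * Phat).mulVec w)^2
      ≤ (ρ2L⁻¹ * (x ⬝ᵥ K.mulVec x)) * (w ⬝ᵥ Phat.mulVec w) := by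
    refine hcs.trans (mul_le_mul hcb1 hcb2 (hMx w) ?_)
    positivity
  have := scalar_key (x ⬝ᵥ K.mulVec x) (w ⬝ᵥ Phat.mulVec w) (x ⬝ᵥ (K * Phat).mulVec w)
    α β ρ2L ha hb hα hβ hρ2pos hαβ hc2
  rw [hε10]
  exact this
end

section
/- Compression-error contraction step (inequality (34), deterministic case). Let C : ℝ^m → ℝ^m be a map such that ‖C(z)/r − z‖² ≤ (1−φ)·‖z‖² for all z ∈ ℝ^m, with φ ∈ (0,1] and r > 0. Let ψ ∈ (0, 1/r] and set c3 = φ·ψ·r/2. Then for all x, x', a ∈ ℝ^m, if a' = a + ψ·C(x − a), then ‖x' − a'‖² ≤ (1 + c3⁻¹)·‖x' − x‖² + (1 − c3 − 2·c3²)·‖x − a‖². -/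
theorem young_aux (A B c : ℝ) (hA : 0 ≤ A) (hB : 0 ≤ B) (hc : 0 < c) :
    (A + B) ^ 2 ≤ (1 + c⁻¹) * A ^ 2 + (1 + c) * B ^ 2 := by
  have hinv : c * c⁻¹ = 1 := mul_inv_cancel₀ (ne_of_gt hc)
  nlinarith [sq_nonneg (A - c * B), mul_pos hc (inv_pos.mpr hc), sq_nonneg A]

/-- Inequality (34) of the paper (deterministic case): the key contraction step for the
compression error in the proof of Lemma 4. -/
theorem compression_error_contraction
    (m : ℕ) (φ r : ℝ) (hφ : φ ∈ Set.Ioc (0:ℝ) 1) (hr : 0 < r)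
    (C : EuclideanSpace ℝ (Fin m) → EuclideanSpace ℝ (Fin m))
    (hC : ∀ z, ‖r⁻¹ • C z - z‖ ^ 2 ≤ (1 - φ) * ‖z‖ ^ 2)
    (ψ : ℝ) (hψ : ψ ∈ Set.Ioc (0:ℝ) (1/r))
    (c3 : ℝ) (hc3 : c3 = φ * ψ * r / 2) :
    ∀ x x' a a' : EuclideanSpace ℝ (Fin m),
      a' = a + ψ • C (x - a) →
      ‖x' - a'‖ ^ 2 ≤ (1 + c3⁻¹) * ‖x' - x‖ ^ 2 + (1 - c3 - 2 * c3 ^ 2) * ‖x - a‖ ^ 2 := by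
  obtain ⟨hφ0, hφ1⟩ := hφ
  obtain ⟨hψ0, hψ1⟩ := hψ
  have hrne : r ≠ 0 := ne_of_gt hr
  have hs1 : ψ * r ≤ 1 := by
    rw [div_eq_inv_mul] at hψ1
    calc ψ * r ≤ (r⁻¹ * 1) * r := by nlinarith
    _ = 1 := by field_simp
  have hspos : 0 < ψ * r := mul_pos hψ0 hr
  have hc3pos : 0 < c3 := by rw [hc3]; positivity
  intro x x' a a' ha'
  set z := x - a with hz
  set u := r⁻¹ • C z with hu
  have h1 := hC z
  have hinner : ‖u‖ ^ 2 + φ * ‖z‖ ^ 2 ≤ 2 * (inner ℝ u z : ℝ) := by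
    have hexp : ‖u - z‖ ^ 2 = ‖u‖ ^ 2 - 2 * (inner ℝ u z : ℝ) + ‖z‖ ^ 2 :=
      norm_sub_sq_real u z
    rw [hexp] at h1
    nlinarith
  have hxa' : x - a' = z - (ψ * r) • u := by
    rw [ha', hu, smul_smul]
    have : ψ * r * r⁻¹ = ψ := by field_simp
    rw [this, hz]
    abel
  have h2 : ‖x - a'‖ ^ 2 ≤ (1 - 2 * c3) * ‖z‖ ^ 2 := by
    rw [hxa']
    have hexp : ‖z - (ψ * r) • u‖ ^ 2
        = ‖z‖ ^ 2 - 2 * ((ψ * r) * (inner ℝ z u : ℝ)) + (ψ * r) ^ 2 * ‖u‖ ^ 2 := by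
      rw [norm_sub_sq_real, real_inner_smul_right, norm_smul]
      simp [abs_of_pos hspos, mul_pow]
    have hcomm : (inner ℝ z u : ℝ) = (inner ℝ u z : ℝ) := (real_inner_comm z u).symm
    rw [hexp, hcomm, hc3]
    nlinarith [sq_nonneg ‖u‖, mul_nonneg (mul_nonneg hspos.le (sub_nonneg.mpr hs1)) (sq_nonneg ‖u‖)]
  have htri : ‖x' - a'‖ ≤ ‖x' - x‖ + ‖x - a'‖ := norm_sub_le_norm_sub_add_norm_sub x' x a'
  have hA : (0:ℝ) ≤ ‖x' - x‖ := norm_nonneg _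
  have hB : (0:ℝ) ≤ ‖x - a'‖ := norm_nonneg _
  have hN : (0:ℝ) ≤ ‖x' - a'‖ := norm_nonneg _
  have hinv : c3 * c3⁻¹ = 1 := mul_inv_cancel₀ (ne_of_gt hc3pos)
  have hsq : ‖x' - a'‖ ^ 2 ≤ (‖x' - x‖ + ‖x - a'‖) ^ 2 := pow_le_pow_left₀ hN htri 2
  have hyoung : (‖x' - x‖ + ‖x - a'‖) ^ 2
      ≤ (1 + c3⁻¹) * ‖x' - x‖ ^ 2 + (1 + c3) * ‖x - a'‖ ^ 2 :=
    young_aux _ _ _ hA hB hc3pos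
  have hfin : (1 + c3) * ‖x - a'‖ ^ 2 ≤ (1 - c3 - 2 * c3 ^ 2) * ‖z‖ ^ 2 := by
    have := mul_le_mul_of_nonneg_left h2 (by linarith : (0:ℝ) ≤ 1 + c3)
    nlinarith
  calc ‖x' - a'‖ ^ 2 ≤ (‖x' - x‖ + ‖x - a'‖) ^ 2 := hsq
    _ ≤ (1 + c3⁻¹) * ‖x' - x‖ ^ 2 + (1 + c3) * ‖x - a'‖ ^ 2 := hyoung
    _ ≤ (1 + c3⁻¹) * ‖x' - x‖ ^ 2 + (1 - c3 - 2 * c3 ^ 2) * ‖z‖ ^ 2 := by linarith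
end

section
/- The norm-sign compressor satisfies Assumption 1 with r = d/2 and φ = 1/d². For every d ≥ 1 and every x ∈ ℝ^d, ‖(‖x‖_∞/d)·sign(x) − x‖² ≤ (1 − 1/d²)·‖x‖², where sign is applied componentwise (sign(t) = 1 for t > 0, −1 for t < 0, 0 for t = 0) and ‖x‖_∞ = max_i |x_i|. Equivalently, the norm-sign compressor C3(x) = (‖x‖_∞/2)·sign(x) satisfies ‖C3(x)/r − x‖² ≤ (1−φ)·‖x‖² for all x, with r = d/2 and φ = 1/d². -/
private lemma sign_sq_le (r : ℝ) : (Real.sign r) ^ 2 ≤ 1 := by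
  rcases lt_trichotomy r 0 with h | h | h
  · simp [Real.sign_of_neg h]
  · simp [h]
  · simp [Real.sign_of_pos h]

private lemma sign_mul_self' (r : ℝ) : Real.sign r * r = |r| := by
  rcases lt_trichotomy r 0 with h | h | h
  · simp [Real.sign_of_neg h, abs_of_neg h]
  · simp [h]
  · simp [Real.sign_of_pos h, abs_of_pos h]

private lemma key_bound (d : ℕ) (hd : 1 ≤ d) (x : EuclideanSpace ℝ (Fin d))
    (c : EuclideanSpace ℝ (Fin d))
    (hc : ∀ i, c i = (⨆ j, |x j|) / d * Real.sign (x i)) :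
    ‖c - x‖ ^ 2 ≤ (1 - 1 / (d : ℝ) ^ 2) * ‖x‖ ^ 2 := by
  have ht0 : (0 : ℝ) < d := by exact_mod_cast hd
  set t : ℝ := (d : ℝ)
  set M : ℝ := ⨆ j, |x j| with hM
  have hMge : ∀ j, |x j| ≤ M := fun j =>
    le_ciSup (f := fun j => |x j|) (Set.Finite.bddAbove (Set.finite_range _)) j
  have hM0 : 0 ≤ M := le_trans (abs_nonneg _) (hMge ⟨0, hd⟩)
  set S1 : ℝ := ∑ i, |x i| with hS1
  set S2 : ℝ := ∑ i, (x i) ^ 2 with hS2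
  haveI : Nonempty (Fin d) := Fin.pos_iff_nonempty.mp hd
  have hx2 : ‖x‖ ^ 2 = S2 := by
    rw [EuclideanSpace.norm_eq, Real.sq_sqrt (Finset.sum_nonneg fun i _ => sq_nonneg _)]
    simp [hS2, Real.norm_eq_abs, sq_abs]
  have hc2 : ‖c - x‖ ^ 2 = ∑ i, (c i - x i) ^ 2 := by
    rw [EuclideanSpace.norm_eq, Real.sq_sqrt (Finset.sum_nonneg fun i _ => sq_nonneg _)]
    simp
  have hterm : ∀ i, (c i - x i) ^ 2 ≤ (M / t) ^ 2 - 2 * (M / t) * |x i| + (x i) ^ 2 := by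
    intro i
    rw [hc i]
    have hs1 : Real.sign (x i) * x i = |x i| := sign_mul_self' _
    have hs2 : (Real.sign (x i)) ^ 2 ≤ 1 := sign_sq_le _
    have ha : 0 ≤ M / t := div_nonneg hM0 ht0.le
    nlinarith [mul_nonneg (mul_nonneg ha ha) (sub_nonneg.mpr hs2)]
  have hsum : ‖c - x‖ ^ 2 ≤ t * (M / t) ^ 2 - 2 * (M / t) * S1 + S2 := by
    rw [hc2]
    calc ∑ i, (c i - x i) ^ 2
        ≤ ∑ i : Fin d, ((M / t) ^ 2 - 2 * (M / t) * |x i| + (x i) ^ 2) :=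
          Finset.sum_le_sum fun i _ => hterm i
      _ = t * (M / t) ^ 2 - 2 * (M / t) * S1 + S2 := by
          simp [Finset.sum_add_distrib, Finset.sum_sub_distrib, ← Finset.mul_sum,
            Finset.sum_const, Finset.card_univ, hS1, hS2, mul_comm]
          rw [← Finset.sum_mul]
  have hMS1 : M ≤ S1 := ciSup_le fun j =>
    Finset.single_le_sum (fun i _ => abs_nonneg (x i)) (Finset.mem_univ j)
  have hS2M : S2 ≤ t * M ^ 2 := by
    calc S2 ≤ ∑ _i : Fin d, M ^ 2 := Finset.sum_le_sum fun i _ => by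
            calc (x i) ^ 2 = |x i| ^ 2 := (sq_abs _).symm
              _ ≤ M ^ 2 := pow_le_pow_left₀ (abs_nonneg _) (hMge i) 2
      _ = t * M ^ 2 := by simp [Finset.sum_const, Finset.card_univ, mul_comm]; exact Or.inl rfl
  have key2 : t * M ^ 2 - 2 * t * M * S1 + S2 ≤ 0 := by
    nlinarith [mul_le_mul_of_nonneg_left hMS1 (mul_nonneg ht0.le hM0)]
  have hfin : t * (M / t) ^ 2 - 2 * (M / t) * S1 + S2 ≤ (1 - 1 / t ^ 2) * S2 := by
    have hdiff : (1 - 1 / t ^ 2) * S2 - (t * (M / t) ^ 2 - 2 * (M / t) * S1 + S2)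
        = (-(t * M ^ 2 - 2 * t * M * S1 + S2)) / t ^ 2 := by
      field_simp
      ring
    have : 0 ≤ (-(t * M ^ 2 - 2 * t * M * S1 + S2)) / t ^ 2 :=
      div_nonneg (by linarith) (by positivity)
    linarith [hdiff ▸ this]
  rw [hx2]
  exact le_trans hsum hfin

/-- The norm-sign compressor `C₃(x) = (‖x‖_∞/2)·sign(x)` satisfies Assumption 1 with
`r = d/2` and `φ = 1/d²`:  `‖C₃(x)/r − x‖² = ‖(‖x‖_∞/d)·sign(x) − x‖² ≤ (1 − 1/d²)·‖x‖²`. -/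
theorem norm_sign_compressor_assumption1
    (d : ℕ) (hd : 1 ≤ d) (x : EuclideanSpace ℝ (Fin d)) :
    (∀ c : EuclideanSpace ℝ (Fin d),
      (∀ i, c i = (⨆ j, |x j|) / d * Real.sign (x i)) →
      ‖c - x‖ ^ 2 ≤ (1 - 1 / (d : ℝ) ^ 2) * ‖x‖ ^ 2)
    ∧ ∀ c3x : EuclideanSpace ℝ (Fin d),
        (∀ i, c3x i = (⨆ j, |x j|) / 2 * Real.sign (x i)) →
        ‖((d : ℝ) / 2)⁻¹ • c3x - x‖ ^ 2 ≤ (1 - 1 / (d : ℝ) ^ 2) * ‖x‖ ^ 2 := by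
  constructor
  · exact fun c hc => key_bound d hd x c hc
  · intro c3x h
    apply key_bound d hd x (((d : ℝ) / 2)⁻¹ • c3x)
    intro i
    have hd0 : (d : ℝ) ≠ 0 := by positivity
    have : (((d : ℝ) / 2)⁻¹ • c3x) i = ((d : ℝ) / 2)⁻¹ * c3x i := rfl
    rw [this, h i]
    field_simp
end

section
/- The norm-sign compressor satisfies Assumption 3 with p = ∞ and φ = 1/2. For every d ≥ 1 and every x ∈ ℝ^d with ‖x‖_∞ ≤ 1, ‖(‖x‖_∞/2)·sign(x) − x‖_∞ ≤ 1/2, where sign is applied componentwise (sign(t) = 1 for t > 0, −1 for t < 0, 0 for t = 0) and ‖x‖_∞ = max_i |x_i|. -/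
theorem abs_half_mul_sign_sub_le {t M : ℝ} (ht : |t| ≤ M) :
    |M / 2 * Real.sign t - t| ≤ M / 2 := by
  rcases lt_trichotomy t 0 with hneg | rfl | hpos
  · rw [Real.sign_of_neg hneg, abs_le]
    rw [abs_of_neg hneg] at ht
    constructor <;> linarith
  · rw [abs_zero] at ht
    simpa [Real.sign_zero] using div_nonneg ht zero_le_two
  · rw [Real.sign_of_pos hpos, abs_le]
    rw [abs_of_pos hpos] at ht
    constructor <;> linarith

theorem norm_sign_compressor_assumption3_general
    (d : ℕ) (x : EuclideanSpace ℝ (Fin d))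
    (hx : (⨆ i, |x i|) ≤ 1)
    (c : EuclideanSpace ℝ (Fin d))
    (hc : ∀ i, c i = (⨆ j, |x j|) / 2 * Real.sign (x i)) :
    (⨆ i, |c i - x i|) ≤ 1/2 := by
  -- `Real.iSup_le` also covers `d = 0`, where the supremum is the junk value `sSup ∅ = 0`.
  refine Real.iSup_le (fun i => ?_) (by norm_num)
  have hxi : |x i| ≤ ⨆ j, |x j| :=
    le_ciSup (f := fun j => |x j|) (Set.finite_range _).bddAbove i
  rw [hc i]
  linarith [abs_half_mul_sign_sub_le hxi]

/-- The norm-sign compressor `C₃(x) = (‖x‖_∞/2)·sign(x)` satisfies Assumption 3 with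
`p = ∞` and `φ = 1/2`: if `‖x‖_∞ ≤ 1` then `‖C₃(x) − x‖_∞ ≤ 1/2`. -/
theorem norm_sign_compressor_assumption3
    (d : ℕ) (hd : 1 ≤ d) (x : EuclideanSpace ℝ (Fin d))
    (hx : (⨆ i, |x i|) ≤ 1)
    (c : EuclideanSpace ℝ (Fin d))
    (hc : ∀ i, c i = (⨆ j, |x j|) / 2 * Real.sign (x i)) :
    (⨆ i, |c i - x i|) ≤ 1/2 :=
  norm_sign_compressor_assumption3_general d x hx c hc
end
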